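/- arXiv:2208.07156 — 2 statements merged into one kernel-verified Lean document; each statement's English description precedes it below -/
import Mathlib

section
/- Let σ > 0, let ν be a probability measure on ℝ (the sampling distribution of the neighboring population's parameter), and let F : ℝ × ℝ → ℝ be bounded and measurable. Define the expected joint fitness g(θ) = ∫∫ F(x, y) d(gaussianReal θ σ²)(x) dν(y). Then g is differentiable at every θ, and g'(θ) = ∫∫ ((x − θ)/σ²) · F(x, y) d(gaussianReal θ σ²)(x) dν(y). In particular, the co-evolutionary gradient with respect to one population's parameter has the same score-function form as in the single-population case: ∇_{θ_i} E[F_i(ς_i')] = E[∇_{θ_i} log p(θ_i') · F_i(ς_i')], where the expectation is over the independent joint distribution of the population's parameter θ_i' and its neighbors' parameters. -/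
/-!
Write the Gaussian law as its density, so that the expected fitness becomes a single integral
`∫ φ_t(x) F(x, y) d(x, y)` over `volume × ν` whose integrand depends on `θ` only through the density
`φ_t`. Since `∂_t φ_t(x) = (x - t)/σ² · φ_t(x)`, differentiating under the integral sign gives the score
form. For `|t - θ| < 1` the score-weighted densities are dominated by `(|x - θ| + 1) e^{-(x-θ)²/(4σ²)}`
(from `(x - θ)² ≤ 2(x - t)² + 2(t - θ)²`), which is integrable, and `F` is bounded, so dominated
differentiation applies.
-/

open MeasureTheory ProbabilityTheory Real NNReal

lemma integrable_abs_sub_add_one_mul_exp_neg_mul_sq {b : ℝ} (hb : 0 < b) (θ : ℝ) :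
    Integrable (fun x ↦ (|x - θ| + 1) * exp (-b * (x - θ) ^ 2)) := by
  have habs : Integrable (fun x : ℝ ↦ |x| * exp (-b * x ^ 2)) := by
    simpa only [abs_mul, abs_of_nonneg (exp_nonneg _)] using (integrable_mul_exp_neg_mul_sq hb).abs
  have hsum := (habs.add (integrable_exp_neg_mul_sq hb)).comp_sub_right θ
  simpa only [Function.comp_def, Pi.add_apply, add_mul, one_mul] using hsum

namespace ProbabilityTheory

variable {v : ℝ≥0}

lemma hasDerivAt_gaussianPDFReal_mean (x t : ℝ) :
    HasDerivAt (fun t ↦ gaussianPDFReal t v x) ((x - t) / v * gaussianPDFReal t v x) t := by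
  have hexponent : HasDerivAt (fun t ↦ -(x - t) ^ 2 / (2 * v)) ((x - t) / v) t := by
    refine ((((hasDerivAt_id' t).const_sub x).fun_pow 2).neg.div_const (2 * (v : ℝ))).congr_deriv ?_
    rw [← mul_div_mul_left (x - t) (v : ℝ) two_ne_zero]
    ring
  refine ((hexponent.exp).const_mul (√(2 * π * v))⁻¹).congr_deriv ?_
  rw [gaussianPDFReal_def]
  ring

lemma gaussianPDFReal_le_of_dist_lt_one {t θ : ℝ} (ht : dist t θ < 1) (x : ℝ) :
    gaussianPDFReal t v x ≤
      exp (1 / (2 * v)) * (√(2 * π * v))⁻¹ * exp (-(4 * (v : ℝ))⁻¹ * (x - θ) ^ 2) := by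
  have hsq : (t - θ) ^ 2 ≤ 1 := by
    rw [Real.dist_eq] at ht
    nlinarith [abs_nonneg (t - θ), sq_abs (t - θ)]
  have hexponent : -(x - t) ^ 2 / (2 * v) ≤ 1 / (2 * v) + -(4 * (v : ℝ))⁻¹ * (x - θ) ^ 2 := by
    have hnum : -(2 * (x - t) ^ 2) ≤ 2 - (x - θ) ^ 2 := by
      nlinarith [sq_nonneg (x - t - (t - θ))]
    calc -(x - t) ^ 2 / (2 * v) = -(2 * (x - t) ^ 2) / (4 * v) := by
          rw [← mul_div_mul_left _ (2 * (v : ℝ)) two_ne_zero]; ring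
      _ ≤ (2 - (x - θ) ^ 2) / (4 * v) := by gcongr
      _ = 1 / (2 * v) + -(4 * (v : ℝ))⁻¹ * (x - θ) ^ 2 := by
          rw [← mul_div_mul_left 1 (2 * (v : ℝ)) two_ne_zero]; ring
  calc gaussianPDFReal t v x = (√(2 * π * v))⁻¹ * exp (-(x - t) ^ 2 / (2 * v)) := rfl
    _ ≤ (√(2 * π * v))⁻¹ * exp (1 / (2 * v) + -(4 * (v : ℝ))⁻¹ * (x - θ) ^ 2) := by gcongr
    _ = _ := by rw [exp_add]; ring

lemma abs_score_mul_gaussianPDFReal_le {t θ : ℝ} (ht : dist t θ < 1) (x : ℝ) :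
    |(x - t) / v * gaussianPDFReal t v x| ≤
      exp (1 / (2 * v)) * (√(2 * π * v))⁻¹ / v *
        ((|x - θ| + 1) * exp (-(4 * (v : ℝ))⁻¹ * (x - θ) ^ 2)) := by
  have hscore : |x - t| ≤ |x - θ| + 1 := by
    have : |θ - t| < 1 := by rwa [abs_sub_comm, ← Real.dist_eq]
    linarith [abs_sub_le x θ t]
  rw [abs_mul, abs_div, abs_of_nonneg v.coe_nonneg, abs_of_nonneg (gaussianPDFReal_nonneg _ _ _)]
  calc |x - t| / v * gaussianPDFReal t v x
      ≤ (|x - θ| + 1) / v *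
          (exp (1 / (2 * v)) * (√(2 * π * v))⁻¹ * exp (-(4 * (v : ℝ))⁻¹ * (x - θ) ^ 2)) :=
        mul_le_mul (by gcongr) (gaussianPDFReal_le_of_dist_lt_one ht x)
          (gaussianPDFReal_nonneg _ _ _) (by positivity)
    _ = _ := by ring

section Prod

variable {β : Type*} [MeasurableSpace β] {ν : Measure β}

lemma integrable_gaussianPDFReal_mul_of_abs_le [IsFiniteMeasure ν] {F : ℝ × β → ℝ}
    (hF : Measurable F) {C : ℝ} (hC : ∀ p, |F p| ≤ C) (t : ℝ) :
    Integrable (fun p ↦ gaussianPDFReal t v p.1 * F p) (volume.prod ν) := by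
  refine Integrable.mono' (((integrable_gaussianPDFReal t v).const_mul C).mul_prod
    (integrable_const (1 : ℝ))) (by fun_prop) (ae_of_all _ fun p ↦ ?_)
  rw [Real.norm_eq_abs, abs_mul, abs_of_nonneg (gaussianPDFReal_nonneg _ _ _), mul_one,
    mul_comm C]
  exact mul_le_mul_of_nonneg_left (hC p) (gaussianPDFReal_nonneg _ _ _)

lemma integral_integral_gaussianReal_eq_integral_prod [SFinite ν] (hv : v ≠ 0) (t : ℝ)
    {f : ℝ × β → ℝ} (hf : Integrable (fun p ↦ gaussianPDFReal t v p.1 * f p) (volume.prod ν)) :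
    ∫ y, ∫ x, f (x, y) ∂gaussianReal t v ∂ν =
      ∫ p, gaussianPDFReal t v p.1 * f p ∂(volume.prod ν) := by
  rw [integral_prod_symm _ hf]
  simp only [integral_gaussianReal_eq_integral_smul hv, smul_eq_mul]

theorem hasDerivAt_integral_integral_gaussianReal [IsFiniteMeasure ν] (hv : v ≠ 0)
    {F : ℝ × β → ℝ} (hF : Measurable F) {C : ℝ} (hC : ∀ p, |F p| ≤ C) (θ : ℝ) :
    HasDerivAt (fun t ↦ ∫ y, ∫ x, F (x, y) ∂gaussianReal t v ∂ν)
      (∫ y, ∫ x, (x - θ) / v * F (x, y) ∂gaussianReal θ v ∂ν) θ := by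
  set K := exp (1 / (2 * v)) * (√(2 * π * v))⁻¹ / v
  have hb : 0 < (4 * (v : ℝ))⁻¹ := by positivity
  have hbound : ∀ p : ℝ × β, ∀ t ∈ Metric.ball θ 1,
      ‖(p.1 - t) / v * gaussianPDFReal t v p.1 * F p‖ ≤
        K * ((|p.1 - θ| + 1) * exp (-(4 * (v : ℝ))⁻¹ * (p.1 - θ) ^ 2)) * C := fun p t ht ↦ by
    rw [Real.norm_eq_abs, abs_mul]
    exact mul_le_mul (abs_score_mul_gaussianPDFReal_le ht p.1) (hC p) (abs_nonneg _)
      (by positivity)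
  obtain ⟨hint, hderiv⟩ := hasDerivAt_integral_of_dominated_loc_of_deriv_le
    (μ := volume.prod ν) (F := fun t p ↦ gaussianPDFReal t v p.1 * F p)
    (Metric.ball_mem_nhds θ one_pos) (.of_forall fun t ↦ by fun_prop)
    (integrable_gaussianPDFReal_mul_of_abs_le hF hC θ) (by fun_prop) (ae_of_all _ hbound)
    (((integrable_abs_sub_add_one_mul_exp_neg_mul_sq hb θ).const_mul K).mul_prod
      (integrable_const C))
    (ae_of_all _ fun p t _ ↦ (hasDerivAt_gaussianPDFReal_mean p.1 t).mul_const (F p))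
  have hint' : Integrable (fun p ↦ gaussianPDFReal θ v p.1 * ((p.1 - θ) / v * F p))
      (volume.prod ν) := by
    simpa only [mul_left_comm, mul_assoc] using hint
  rw [integral_integral_gaussianReal_eq_integral_prod hv θ hint']
  simp only [integral_integral_gaussianReal_eq_integral_prod hv _
    (integrable_gaussianPDFReal_mul_of_abs_le hF hC _)]
  simpa only [mul_left_comm, mul_assoc] using hderiv

end Prod

end ProbabilityTheory

/-- Score-function form of the co-evolutionary gradient with respect to one population's
parameter: with the neighbor's parameter sampled from a probability measure `ν` independently
of the population's Gaussian parameter, the expected joint fitness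
`g(θ) = ∫∫ F(x, y) d(gaussianReal θ σ²)(x) dν(y)` is differentiable at every `θ` with
`g'(θ) = ∫∫ ((x − θ)/σ²) · F(x, y) d(gaussianReal θ σ²)(x) dν(y)`. -/
theorem coevolutionary_joint_fitness_hasDerivAt_score
    (σ : ℝ) (hσ : 0 < σ) (ν : Measure ℝ) [IsProbabilityMeasure ν]
    (F : ℝ × ℝ → ℝ) (hF_meas : Measurable F) (hF_bdd : ∃ C : ℝ, ∀ p, |F p| ≤ C) (θ : ℝ) :
    HasDerivAt
      (fun t : ℝ => ∫ y, ∫ x, F (x, y) ∂(gaussianReal t (Real.toNNReal (σ ^ 2))) ∂ν)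
      (∫ y, ∫ x, ((x - θ) / σ ^ 2) * F (x, y)
        ∂(gaussianReal θ (Real.toNNReal (σ ^ 2))) ∂ν) θ := by
  obtain ⟨C, hC⟩ := hF_bdd
  have hv : (σ ^ 2).toNNReal ≠ 0 := by simpa using hσ.ne'
  have hv_coe : ((σ ^ 2).toNNReal : ℝ) = σ ^ 2 := Real.coe_toNNReal _ (sq_nonneg σ)
  simpa only [hv_coe] using hasDerivAt_integral_integral_gaussianReal hv hF_meas hC θ
end

section
/- Let σ > 0, let ν be a probability measure on ℝ, let q : ℝ → ℝ be a bounded nonnegative measurable confidence weight (e.g., the neighbor's Gaussian density), and let F : ℝ × ℝ → ℝ be bounded and measurable. Define the rectified expectation Ẽ(θ) = ∫∫ F(x, y) · q(y) d(gaussianReal θ σ²)(x) dν(y). Then Ẽ is differentiable at every θ, and Ẽ'(θ) = ∫∫ ((x − θ)/σ²) · F(x, y) · q(y) d(gaussianReal θ σ²)(x) dν(y). (This is the rescaled-gradient identity ∇_{θ_i} E_{θ_i'}[F_i(θ_i')] = E_{θ_i'}[∇_{θ_i} log p(θ_i') · F_i(ς_i') · ∏_{c∈N_i} p(θ_c')]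 of the natural co-evolutionary strategy.) -/
/-!
Writing the Gaussian law through its density turns the double integral into a single integral
over `ν ⊗ volume` whose integrand depends on `t` only through `gaussianPDFReal t v x`. The
derivative of that density in its mean is the score `(x - t) / v` times the density, and for
`|t - θ| ≤ 1` it is dominated by a multiple of the wider density `gaussianPDFReal θ (4 v)`.
Since `F · q` is bounded and `ν` is finite, differentiation under the integral sign applies.
-/

open MeasureTheory ProbabilityTheory Real Metric
open scoped NNReal

lemma abs_mul_exp_neg_sq_div_le {v : ℝ} (hv : 0 < v) (s : ℝ) :
    |s| * rexp (-s ^ 2 / (2 * v)) ≤ √(2 * v) * rexp (-s ^ 2 / (4 * v)) := by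
  have hw : 0 < √(2 * v) := Real.sqrt_pos.mpr (by positivity)
  -- `4 v |s| ≤ √(2v) (4v + s²)` by AM-GM, then `1 + u ≤ exp u`
  have h_poly : |s| ≤ √(2 * v) * (1 + s ^ 2 / (4 * v)) := by
    rw [show √(2 * v) * (1 + s ^ 2 / (4 * v)) = √(2 * v) * (4 * v + s ^ 2) / (4 * v) by
      field_simp, le_div_iff₀ (by positivity)]
    nlinarith [mul_nonneg hw.le (sq_nonneg (√(2 * v) - |s|)), sq_abs s,
      Real.sq_sqrt (by positivity : (0 : ℝ) ≤ 2 * v)]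
  have h_exp : |s| ≤ √(2 * v) * rexp (s ^ 2 / (4 * v)) :=
    h_poly.trans (mul_le_mul_of_nonneg_left (by linarith [add_one_le_exp (s ^ 2 / (4 * v))])
      hw.le)
  calc |s| * rexp (-s ^ 2 / (2 * v))
      ≤ √(2 * v) * rexp (s ^ 2 / (4 * v)) * rexp (-s ^ 2 / (2 * v)) := by gcongr
    _ = √(2 * v) * rexp (-s ^ 2 / (4 * v)) := by
      rw [mul_assoc, ← exp_add]
      congr 2
      field_simp
      ring

lemma exp_neg_sq_sub_div_le {v : ℝ} (hv : 0 < v) (a : ℝ) {d : ℝ} (hd : |d| ≤ 1) :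
    rexp (-(a - d) ^ 2 / (4 * v)) ≤ rexp (1 / (4 * v)) * rexp (-a ^ 2 / (8 * v)) := by
  -- `a² ≤ 2 (a - d)² + 2 d²`
  rw [← exp_add, exp_le_exp, div_add_div _ _ (by positivity) (by positivity),
    div_le_div_iff₀ (by positivity) (by positivity)]
  have hd2 : d ^ 2 ≤ 1 := by nlinarith [sq_abs d, abs_nonneg d]
  nlinarith [sq_nonneg (a - 2 * d), mul_pos hv hv]

lemma hasDerivAt_gaussianPDFReal_mean (v : ℝ≥0) (x t : ℝ) :
    HasDerivAt (fun m ↦ gaussianPDFReal m v x) ((x - t) / v * gaussianPDFReal t v x) t := by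
  simp only [gaussianPDFReal_def]
  have h_exponent : HasDerivAt (fun m : ℝ ↦ -(x - m) ^ 2 / (2 * v)) ((x - t) / v) t := by
    refine ((((hasDerivAt_id' t).const_sub x).pow 2).neg.div_const (2 * (v : ℝ))).congr_deriv ?_
    rcases eq_or_ne (v : ℝ) 0 with hv | hv
    · simp [hv]
    · field_simp
      ring
  exact (h_exponent.exp.const_mul (√(2 * π * v))⁻¹).congr_deriv (by ring)

lemma abs_score_mul_gaussianPDFReal_le {v : ℝ≥0} (hv : v ≠ 0) (θ : ℝ) :
    ∃ K, ∀ t ∈ closedBall θ 1, ∀ x,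
      |(x - t) / v * gaussianPDFReal t v x| ≤ K * gaussianPDFReal θ (4 * v) x := by
  have hv' : (0 : ℝ) < v := by positivity
  refine ⟨(√(2 * π * v))⁻¹ / v * √(2 * v) * rexp (1 / (4 * v)) * √(2 * π * (4 * v)),
    fun t ht x ↦ ?_⟩
  have hdist : |x - θ - (x - t)| ≤ 1 := by
    rw [sub_sub_sub_cancel_left, ← Real.dist_eq]; exact ht
  calc |(x - t) / v * gaussianPDFReal t v x|
      = (√(2 * π * v))⁻¹ / v * (|x - t| * rexp (-(x - t) ^ 2 / (2 * v))) := by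
        rw [gaussianPDFReal_def, abs_mul, abs_div, abs_mul, abs_of_pos hv',
          abs_of_pos (exp_pos _), abs_of_pos (by positivity : (0 : ℝ) < (√(2 * π * v))⁻¹)]
        ring
    _ ≤ (√(2 * π * v))⁻¹ / v * (√(2 * v) * rexp (-(x - t) ^ 2 / (4 * v))) :=
        mul_le_mul_of_nonneg_left (abs_mul_exp_neg_sq_div_le hv' _) (by positivity)
    _ ≤ (√(2 * π * v))⁻¹ / v * (√(2 * v) *
          (rexp (1 / (4 * v)) * rexp (-(x - θ) ^ 2 / (8 * v)))) := by
        gcongr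
        simpa using exp_neg_sq_sub_div_le hv' (x - θ) hdist
    _ = _ := by
        rw [gaussianPDFReal_def]
        push_cast
        field_simp
        ring_nf

section

variable {α : Type*} [MeasurableSpace α] {ν : Measure α} {v : ℝ≥0}

lemma integral_integral_gaussianReal_eq_integral_prod [SFinite ν] (hv : v ≠ 0) (m : ℝ)
    {g : ℝ × α → ℝ}
    (hg : Integrable (fun z : α × ℝ ↦ gaussianPDFReal m v z.2 * g (z.2, z.1)) (ν.prod volume)) :
    ∫ y, ∫ x, g (x, y) ∂gaussianReal m v ∂ν
      = ∫ z, gaussianPDFReal m v z.2 * g (z.2, z.1) ∂(ν.prod volume) := by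
  simp_rw [integral_gaussianReal_eq_integral_smul hv, smul_eq_mul]
  exact (integral_prod _ hg).symm

lemma integrable_gaussianPDFReal_mul_of_bounded [IsFiniteMeasure ν] (m : ℝ) {g : ℝ × α → ℝ}
    (hg : Measurable g) {C : ℝ} (hC : ∀ p, |g p| ≤ C) :
    Integrable (fun z : α × ℝ ↦ gaussianPDFReal m v z.2 * g (z.2, z.1)) (ν.prod volume) :=
  ((integrable_gaussianPDFReal m v).comp_snd ν).mul_bdd
    (hg.comp measurable_swap).aestronglyMeasurable (ae_of_all _ fun _ ↦ hC _)

theorem hasDerivAt_integral_integral_gaussianReal_mean [IsFiniteMeasure ν] (hv : v ≠ 0)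
    {G : ℝ × α → ℝ} (hG : Measurable G) (hG_bdd : ∃ C, ∀ p, |G p| ≤ C) (θ : ℝ) :
    HasDerivAt (fun t ↦ ∫ y, ∫ x, G (x, y) ∂gaussianReal t v ∂ν)
      (∫ y, ∫ x, (x - θ) / v * G (x, y) ∂gaussianReal θ v ∂ν) θ := by
  obtain ⟨C, hC⟩ := hG_bdd
  obtain ⟨K, hK⟩ := abs_score_mul_gaussianPDFReal_le hv θ
  have hΦ_int (t : ℝ) := integrable_gaussianPDFReal_mul_of_bounded (ν := ν) (v := v) t hG hC
  have hΦ'_meas : Measurable fun z : α × ℝ ↦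
      gaussianPDFReal θ v z.2 * ((z.2 - θ) / v * G (z.2, z.1)) := by fun_prop
  have h_bound (z : α × ℝ) (t : ℝ) (ht : t ∈ closedBall θ 1) :
      ‖gaussianPDFReal t v z.2 * ((z.2 - t) / v * G (z.2, z.1))‖
        ≤ K * gaussianPDFReal θ (4 * v) z.2 * C :=
    calc ‖gaussianPDFReal t v z.2 * ((z.2 - t) / v * G (z.2, z.1))‖
        = |(z.2 - t) / v * gaussianPDFReal t v z.2| * |G (z.2, z.1)| := by
          rw [Real.norm_eq_abs, ← abs_mul]; ring_nf
      _ ≤ K * gaussianPDFReal θ (4 * v) z.2 * C :=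
          mul_le_mul (hK t ht z.2) (hC _) (abs_nonneg _) ((abs_nonneg _).trans (hK t ht z.2))
  obtain ⟨hΦ'_int, hderiv⟩ := hasDerivAt_integral_of_dominated_loc_of_deriv_le
    (F' := fun t z ↦ gaussianPDFReal t v z.2 * ((z.2 - t) / v * G (z.2, z.1)))
    (closedBall_mem_nhds θ one_pos) (.of_forall fun t ↦ (hΦ_int t).aestronglyMeasurable)
    (hΦ_int θ) hΦ'_meas.aestronglyMeasurable (ae_of_all _ h_bound)
    ((((integrable_gaussianPDFReal θ (4 * v)).comp_snd ν).const_mul K).mul_const C)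
    (ae_of_all _ fun z t _ ↦
      ((hasDerivAt_gaussianPDFReal_mean v z.2 t).mul_const (G (z.2, z.1))).congr_deriv (by ring))
  rw [funext fun t ↦ integral_integral_gaussianReal_eq_integral_prod hv t (hΦ_int t),
    integral_integral_gaussianReal_eq_integral_prod (g := fun p ↦ (p.1 - θ) / v * G p) hv θ
      hΦ'_int]
  exact hderiv

end

theorem rectified_expectation_hasDerivAt_score_general
    (σ : ℝ) (hσ : 0 < σ) (ν : Measure ℝ) [IsProbabilityMeasure ν]
    (q : ℝ → ℝ) (hq_meas : Measurable q)
    (hq_bdd : ∃ Cq : ℝ, ∀ y, |q y| ≤ Cq)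
    (F : ℝ × ℝ → ℝ) (hF_meas : Measurable F) (hF_bdd : ∃ C : ℝ, ∀ p, |F p| ≤ C) (θ : ℝ) :
    HasDerivAt
      (fun t : ℝ => ∫ y, ∫ x, F (x, y) * q y ∂(gaussianReal t (Real.toNNReal (σ ^ 2))) ∂ν)
      (∫ y, ∫ x, ((x - θ) / σ ^ 2) * F (x, y) * q y
        ∂(gaussianReal θ (Real.toNNReal (σ ^ 2))) ∂ν) θ := by
  obtain ⟨C, hC⟩ := hF_bdd
  obtain ⟨Cq, hCq⟩ := hq_bdd
  have hv : (σ ^ 2).toNNReal ≠ 0 := by simpa using hσ.ne'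
  have hFq_bdd (p : ℝ × ℝ) : |F p * q p.2| ≤ C * Cq := by
    rw [abs_mul]
    exact mul_le_mul (hC p) (hCq _) (abs_nonneg _) ((abs_nonneg _).trans (hC p))
  convert hasDerivAt_integral_integral_gaussianReal_mean (ν := ν) hv
    (G := fun p ↦ F p * q p.2) (by fun_prop) ⟨_, hFq_bdd⟩ θ using 5 with y x
  rw [Real.coe_toNNReal _ (sq_nonneg σ)]
  ring

/-- Rescaled-gradient identity of the natural co-evolutionary strategy: with a bounded
nonnegative measurable confidence weight `q` on the neighbor's sample, the rectified
expectation `Ẽ(θ) = ∫∫ F(x, y) · q(y) d(gaussianReal θ σ²)(x) dν(y)` is differentiable at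
every `θ` with `Ẽ'(θ) = ∫∫ ((x − θ)/σ²) · F(x, y) · q(y) d(gaussianReal θ σ²)(x) dν(y)`. -/
theorem rectified_expectation_hasDerivAt_score
    (σ : ℝ) (hσ : 0 < σ) (ν : Measure ℝ) [IsProbabilityMeasure ν]
    (q : ℝ → ℝ) (hq_meas : Measurable q) (hq_nonneg : ∀ y, 0 ≤ q y)
    (hq_bdd : ∃ Cq : ℝ, ∀ y, |q y| ≤ Cq)
    (F : ℝ × ℝ → ℝ) (hF_meas : Measurable F) (hF_bdd : ∃ C : ℝ, ∀ p, |F p| ≤ C) (θ : ℝ) :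
    HasDerivAt
      (fun t : ℝ => ∫ y, ∫ x, F (x, y) * q y ∂(gaussianReal t (Real.toNNReal (σ ^ 2))) ∂ν)
      (∫ y, ∫ x, ((x - θ) / σ ^ 2) * F (x, y) * q y
        ∂(gaussianReal θ (Real.toNNReal (σ ^ 2))) ∂ν) θ :=
  rectified_expectation_hasDerivAt_score_general σ hσ ν q hq_meas hq_bdd F hF_meas hF_bdd θ
end
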